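/- arXiv:1506.03417 — 2 statements merged into one kernel-verified Lean document; each statement's English description precedes it below -/
import Mathlib

section
/- Pareto policy optimality (Theorem 1): Let Π be a finite set of stationary policies; for each π ∈ Π let P^π be its transition matrix with unique stationary distribution β^π, M^π = P^π − I, and k^π the one-stage expected cost vector. Suppose π° ∈ Π satisfies k^{π°} ≤ k^π componentwise for all π ∈ Π, and there exists q ∈ R^{|S|} with M^π q ≥ 0 for all π and such that k^π + M^π q is a constant vector ψ^π · 1 for each π. Then the average cost of π°, ψ^{π°} = β^{π°} · k^{π°}, satisfies ψ^{π°} ≤ ψ^π for all π ∈ Π, i.e., π° minimizes the long-run expected average cost. -/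
open Matrix

/-- Theorem 1 (Pareto policy optimality). Over a finite set of policies `ι`, each with a
stochastic transition matrix `P π`, unique stationary distribution `β π`, one-stage cost
vector `k π`, and `k π + (P π − I) q = ψ π · 1` with `(P π − I) q ≥ 0`: if `π°` satisfies
`k π° ≤ k π` componentwise for every `π`, then `ψ π° = β π° · k π°` and
`ψ π° ≤ ψ π` for every `π`, i.e. `π°` minimizes the long-run expected average cost. -/
theorem pareto_policy_minimizes_average_cost
    {S ι : Type*} [Fintype S] [Nonempty S] [DecidableEq S] [Fintype ι]
    (P : ι → Matrix S S ℝ)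
    (hPnonneg : ∀ π i j, 0 ≤ P π i j)
    (hProw : ∀ π i, ∑ j, P π i j = 1)
    (β : ι → S → ℝ)
    (hβnonneg : ∀ π i, 0 ≤ β π i)
    (hβsum : ∀ π, ∑ i, β π i = 1)
    (hβstat : ∀ π, β π ᵥ* P π = β π)
    (hβuniq : ∀ π (β' : S → ℝ), (∀ i, 0 ≤ β' i) → (∑ i, β' i = 1) →
      β' ᵥ* P π = β' → β' = β π)
    (k : ι → S → ℝ) (q : S → ℝ) (ψ : ι → ℝ)
    (hq : ∀ π, 0 ≤ (P π - 1) *ᵥ q)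
    (hconst : ∀ π, k π + (P π - 1) *ᵥ q = fun _ => ψ π)
    (πo : ι)
    (hpareto : ∀ π, k πo ≤ k π) :
    ψ πo = ∑ i, β πo i * k πo i ∧ ∀ π, ψ πo ≤ ψ π := by
  -- β πo ⬝ (P πo - 1) *ᵥ q = 0 since β πo is stationary
  have hzero : ∑ i, β πo i * ((P πo - 1) *ᵥ q) i = 0 := by
    have : β πo ⬝ᵥ ((P πo - 1) *ᵥ q) = 0 := by
      rw [Matrix.dotProduct_mulVec, Matrix.vecMul_sub, hβstat, Matrix.vecMul_one,
        sub_self, zero_dotProduct]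
    simpa [dotProduct] using this
  -- ∑ β π i * ψ c = ψ c
  have hsumψ : ∀ π c, ∑ i, β π i * c = c := by
    intro π c
    rw [← Finset.sum_mul, hβsum, one_mul]
  have hconst' : ∀ π i, k π i + ((P π - 1) *ᵥ q) i = ψ π := by
    intro π i
    have := congrFun (hconst π) i
    simpa using this
  have heq : ψ πo = ∑ i, β πo i * k πo i := by
    calc ψ πo = ∑ i, β πo i * ψ πo := (hsumψ πo _).symm
    _ = ∑ i, β πo i * (k πo i + ((P πo - 1) *ᵥ q) i) := by
        simp_rw [hconst']
    _ = (∑ i, β πo i * k πo i) + ∑ i, β πo i * ((P πo - 1) *ᵥ q) i := by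
        rw [← Finset.sum_add_distrib]; congr 1; ext i; ring
    _ = ∑ i, β πo i * k πo i := by rw [hzero, add_zero]
  refine ⟨heq, fun π => ?_⟩
  have hψπ : ψ π = ∑ i, β πo i * (k π i + ((P π - 1) *ᵥ q) i) := by
    simp_rw [hconst']; exact (hsumψ πo _).symm
  rw [heq, hψπ]
  apply Finset.sum_le_sum
  intro i _
  have h1 : k πo i ≤ k π i := hpareto π i
  have h2 : (0 : ℝ) ≤ ((P π - 1) *ᵥ q) i := hq π i
  have h3 : 0 ≤ β πo i := hβnonneg πo i
  nlinarith
end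

section
/- If for every policy π in a finite set Π the vector k^π + M^π q is constant (equal to ψ^π · 1) with M^π q ≥ 0 componentwise, and π° achieves the componentwise minimum of k^π over Π, then ψ^{π°} = min_x k^{π°}(x) + (M^{π°} q)(x) and moreover ψ^{π°} ≤ min_{π∈Π} ψ^π; that is, the Pareto policy achieves the max-crossing value which equals the min-common value (strong duality, Corollary 1). -/
open Matrix

/-- Strong duality (Corollary 1): if for every policy `π` in a finite set the vector
`k π + M π q` is constant equal to `ψ π · 1` with `M π q ≥ 0` componentwise, and `π°`
achieves the componentwise minimum of the one-stage costs, then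
`ψ π° = min_x (k π° x + (M π° q) x)` and `ψ π° ≤ min_π ψ π`. -/
theorem pareto_policy_strong_duality
    {S ι : Type*} [Fintype S] [Nonempty S] [DecidableEq S] [Fintype ι] [Nonempty ι]
    (P : ι → Matrix S S ℝ)
    (hPnonneg : ∀ π i j, 0 ≤ P π i j)
    (hProw : ∀ π i, ∑ j, P π i j = 1)
    (β : ι → S → ℝ)
    (hβnonneg : ∀ π i, 0 ≤ β π i)
    (hβsum : ∀ π, ∑ i, β π i = 1)
    (hβstat : ∀ π, β π ᵥ* P π = β π)
    (hβuniq : ∀ π (β' : S → ℝ), (∀ i, 0 ≤ β' i) → (∑ i, β' i = 1) →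
      β' ᵥ* P π = β' → β' = β π)
    (k : ι → S → ℝ) (q : S → ℝ) (ψ : ι → ℝ)
    (hq : ∀ π, 0 ≤ (P π - 1) *ᵥ q)
    (hconst : ∀ π, k π + (P π - 1) *ᵥ q = fun _ => ψ π)
    (πo : ι)
    (hpareto : ∀ π x, k πo x ≤ k π x) :
    ψ πo = ⨅ x : S, (k πo x + ((P πo - 1) *ᵥ q) x) ∧ ψ πo ≤ ⨅ π : ι, ψ π := by

  have h1 : ∀ π x, k π x + ((P π - 1) *ᵥ q) x = ψ π := fun π x => congrFun (hconst π) x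
  constructor
  · have : ∀ x : S, k πo x + ((P πo - 1) *ᵥ q) x = ψ πo := h1 πo
    simp only [this]
    exact (ciInf_const).symm
  · -- β πo ⬝ᵥ ((P πo - 1) *ᵥ q) = 0
    have hzero : β πo ⬝ᵥ ((P πo - 1) *ᵥ q) = 0 := by
      rw [dotProduct_mulVec, Matrix.vecMul_sub, hβstat πo, Matrix.vecMul_one, sub_self,
        zero_dotProduct]
    have hpsio : ψ πo = ∑ x, β πo x * k πo x := by
      have : ∑ x, β πo x * (k πo x + ((P πo - 1) *ᵥ q) x) = ψ πo := by
        simp only [h1 πo, ← Finset.sum_mul, hβsum πo, one_mul]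
      rw [← this]
      have := hzero
      simp only [dotProduct] at this
      rw [Finset.sum_congr rfl (fun x _ => mul_add (β πo x) (k πo x) _),
        Finset.sum_add_distrib, this, add_zero]
    refine le_ciInf fun π => ?_
    have hk : ∀ x, k π x ≤ ψ π := fun x => by
      have := h1 π x
      have h2 := hq π x
      simp only [Pi.zero_apply] at h2
      linarith
    calc ψ πo = ∑ x, β πo x * k πo x := hpsio
      _ ≤ ∑ x, β πo x * k π x :=
          Finset.sum_le_sum fun x _ => mul_le_mul_of_nonneg_left (hpareto π x) (hβnonneg πo x)
      _ ≤ ∑ x, β πo x * ψ π :=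
          Finset.sum_le_sum fun x _ => mul_le_mul_of_nonneg_left (hk x) (hβnonneg πo x)
      _ = ψ π := by rw [← Finset.sum_mul, hβsum πo, one_mul]
end
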